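/- arXiv:1210.8387 — 2 statements merged into one kernel-verified Lean document; each statement's English description precedes it below -/
import Mathlib

section
/- Let $k$ be a field of characteristic $p > 0$ and let $a \neq b$ be elements of $k$. In the field $R = k(t)$ of rational functions, there is no $f \in k(t)$ such that $\frac{1}{t-a} - \frac{1}{t-b} = f^p - f$. -/
/-! Let `v` be the valuation of `k(t)` at `t = a`. The left-hand side has a simple pole there,
`v = exp 1`. If `v f ≤ 1` then `v (f ^ p - f) ≤ 1`; otherwise `f ^ p` dominates and
`v (f ^ p - f) = (v f) ^ p`, whose exponent is divisible by `p`. Neither can equal `exp 1`. -/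

open Polynomial IsDedekindDomain.HeightOneSpectrum WithZero

theorem Valuation.map_pow_sub_self_of_one_lt {R Γ₀ : Type*} [Ring R]
    [LinearOrderedCommGroupWithZero Γ₀] (v : Valuation R Γ₀) {x : R} {n : ℕ} (hn : 1 < n)
    (h : 1 < v (x ^ n - x)) : v (x ^ n - x) = v x ^ n := by
  have hx : 1 < v x := by
    by_contra! hx
    refine h.not_ge ((v.map_sub _ _).trans (max_le ?_ hx))
    rw [v.map_pow]
    exact pow_le_one₀ zero_le hx
  rw [v.map_sub_eq_of_lt_left (by rw [v.map_pow]; exact lt_self_pow₀ hx hn), v.map_pow]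

theorem WithZero.one_lt_exp_iff {G : Type*} [AddMonoid G] [Preorder G] {a : G} :
    1 < exp a ↔ 0 < a := by
  rw [← exp_zero, exp_lt_exp]

theorem WithZero.natCast_dvd_of_pow_eq_exp {x : ℤᵐ⁰} {n : ℕ} {m : ℤ} (h : x ^ n = exp m) :
    (n : ℤ) ∣ m := by
  induction x using WithZero.expRecOn with
  | zero =>
    rcases n with _ | n
    · rw [pow_zero, ← exp_zero, exp_inj] at h
      simp [← h]
    · rw [zero_pow n.succ_ne_zero] at h
      exact absurd h.symm exp_ne_zero
  | exp c =>
    rw [← exp_nsmul, exp_inj] at h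
    exact ⟨c, by rw [← h, nsmul_eq_mul]⟩

theorem RatFunc.algebraMap_X_sub_C {K : Type*} [Field K] (a : K) :
    algebraMap K[X] (RatFunc K) (Polynomial.X - Polynomial.C a) = RatFunc.X - RatFunc.C a := by
  simp [RatFunc.algebraMap_X, RatFunc.algebraMap_C]

namespace Polynomial

variable {K : Type*} [Field K]

noncomputable def idealXSubC (a : K) : IsDedekindDomain.HeightOneSpectrum K[X] where
  asIdeal := Ideal.span {X - C a}
  isPrime := (Ideal.span_singleton_prime (X_sub_C_ne_zero a)).mpr (prime_X_sub_C a)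
  ne_bot := by rw [ne_eq, Ideal.span_singleton_eq_bot]; exact X_sub_C_ne_zero a

theorem valuation_X_sub_C_self (a : K) :
    (idealXSubC a).valuation (RatFunc K) (RatFunc.X - RatFunc.C a) = exp (-1 : ℤ) := by
  rw [← RatFunc.algebraMap_X_sub_C, valuation_of_algebraMap]
  exact intValuation_singleton _ (X_sub_C_ne_zero a) rfl

theorem valuation_X_sub_C_of_ne {a b : K} (hab : a ≠ b) :
    (idealXSubC a).valuation (RatFunc K) (RatFunc.X - RatFunc.C b) = 1 := by
  rw [← RatFunc.algebraMap_X_sub_C, valuation_of_algebraMap, intValuation_eq_one_iff]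
  change X - C b ∉ Ideal.span {X - C a}
  rw [Ideal.mem_span_singleton, dvd_iff_isRoot, IsRoot, eval_sub, eval_X, eval_C, sub_eq_zero]
  exact hab

theorem valuation_inv_X_sub_C_sub_inv_X_sub_C {a b : K} (hab : a ≠ b) :
    (idealXSubC a).valuation (RatFunc K)
      ((RatFunc.X - RatFunc.C a)⁻¹ - (RatFunc.X - RatFunc.C b)⁻¹) = exp (1 : ℤ) := by
  have hpole : (idealXSubC a).valuation (RatFunc K) (RatFunc.X - RatFunc.C a)⁻¹ = exp 1 := by
    rw [map_inv₀, valuation_X_sub_C_self, exp_neg, inv_inv]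
  have hunit : (idealXSubC a).valuation (RatFunc K) (RatFunc.X - RatFunc.C b)⁻¹ = 1 := by
    rw [map_inv₀, valuation_X_sub_C_of_ne hab, inv_one]
  have hlt : (idealXSubC a).valuation (RatFunc K) (RatFunc.X - RatFunc.C b)⁻¹ <
      (idealXSubC a).valuation (RatFunc K) (RatFunc.X - RatFunc.C a)⁻¹ := by
    rw [hpole, hunit, one_lt_exp_iff]
    exact one_pos
  rw [Valuation.map_sub_eq_of_lt_left _ hlt, hpole]

end Polynomial

theorem no_artinSchreier_solution_ratFunc_general (k : Type*) [Field k] (p : ℕ) (hp : p.Prime)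
    (a b : k) (hab : a ≠ b) :
    ¬∃ f : RatFunc k,
      (RatFunc.X - RatFunc.C a)⁻¹ - (RatFunc.X - RatFunc.C b)⁻¹ = f ^ p - f := by
  rintro ⟨f, hf⟩
  set v := (idealXSubC a).valuation (RatFunc k)
  have hval : v (f ^ p - f) = exp 1 := hf ▸ valuation_inv_X_sub_C_sub_inv_X_sub_C hab
  have hpow : v (f ^ p - f) = v f ^ p :=
    v.map_pow_sub_self_of_one_lt hp.one_lt (by rw [hval, one_lt_exp_iff]; exact one_pos)
  have hdvd : (p : ℤ) ∣ 1 := natCast_dvd_of_pow_eq_exp (hpow.symm.trans hval)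
  exact hp.not_dvd_one (Int.natCast_dvd_natCast.mp hdvd)

/-- Let `k` be a field of characteristic `p > 0` and `a ≠ b` in `k`. In the
field `k(t)` of rational functions there is no `f` with `1/(t-a) - 1/(t-b) = f^p - f`. -/
theorem no_artinSchreier_solution_ratFunc (k : Type*) [Field k] (p : ℕ) (hp : p.Prime)
    [CharP k p] (a b : k) (hab : a ≠ b) :
    ¬∃ f : RatFunc k,
      (RatFunc.X - RatFunc.C a)⁻¹ - (RatFunc.X - RatFunc.C b)⁻¹ = f ^ p - f :=
  no_artinSchreier_solution_ratFunc_general k p hp a b hab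
end

section
/- Let $(R, \mathfrak{m})$ be a regular local ring of characteristic $p > 0$ with regular system of parameters $x_1, \dots, x_d$, $d \geq 1$. If $r \in R$ satisfies $r^p \in (x_1^{np}, \dots, x_{i-1}^{np}, x_i^p, x_{i+1}^{np}, \dots, x_d^{np})$ for every $1 \le i \le d$ (where $n \geq 2$), then $r \in (x_1 \cdots x_d, x_1^n, \dots, x_d^n)$. -/
/-!
Everything rests on one consequence of regularity: a regular sequence in a Noetherian local ring
stays regular under permutation, so each `x k` is a nonzerodivisor modulo any ideal generated by
powers of the other `x j`; the exponents can be raised one at a time, because `w` regular modulo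
`J` and `y` regular modulo `(w) + J` make `y` regular modulo `(wᵃ) + J`.

Frobenius then reflects membership in the ideals `(x_j ^ e_j)`. Raising one exponent from `a` to
`a + 1`, write `c = u x_k + z`; then `uᵖ x_kᵖ ∈ (x_k ^ ((a+1)p), x_j ^ (p e_j) : j ≠ k)`, and
cancelling `x_kᵖ` lets the induction apply to `u`. This gives `r ∈ (x_i, x_j ^ n : j ≠ i)` for
every `i`. Finally, writing `r = c x_k + z` from the `k`-th of these ideals, `c` lies in the
analogous ideals with the `k`-th exponent lowered by one, and induction over the indices lands `r`
in `(x_1 ⋯ x_d, x_j ^ n)`.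
-/

open Ideal RingTheory.Sequence IsLocalRing Function Set

section Ideals

variable {R ι : Type*} [CommRing R]

lemma Ideal.span_range_eq_span_singleton_sup (g : ι → R) (k : ι) :
    span (range g) = span {g k} ⊔ span (g '' {k}ᶜ) := by
  rw [← insert_image_compl_eq_range g k, span_insert]

lemma Ideal.span_range_apply_update [DecidableEq ι] (g : ι → ℕ → R) (e : ι → ℕ) (k : ι)
    (a : ℕ) : span (range fun j => g j (update e k a j)) =
      span {g k a} ⊔ span ((fun j => g j (e j)) '' {k}ᶜ) := by
  rw [span_range_eq_span_singleton_sup _ k, update_self]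
  congr 2
  exact image_congr fun j hj => by rw [update_of_ne hj]

lemma Ideal.span_range_pow_antitone (x : ι → R) {e f : ι → ℕ} (hef : e ≤ f) :
    span (range fun j => x j ^ f j) ≤ span (range fun j => x j ^ e j) :=
  span_le.mpr <| range_subset_iff.mpr fun j =>
    mem_of_dvd _ (pow_dvd_pow (x j) (hef j)) (subset_span (mem_range_self j))

lemma Ideal.pow_mem_span_image_pow (p : ℕ) [ExpChar R p] {G : Set R} {z : R} (hz : z ∈ span G) :
    z ^ p ∈ span ((· ^ p) '' G) := by
  have hfrob : ⇑(frobenius R p) = (· ^ p) := funext (frobenius_def p)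
  simpa [map_span, hfrob] using mem_map_of_mem (frobenius R p) hz

variable {J : Ideal R} {w : R}

lemma Ideal.mul_pow_mem_span_pow_add_sup {c : R} {m : ℕ} (hc : c ∈ span {w ^ m} ⊔ J) (t : ℕ) :
    c * w ^ t ∈ span {w ^ (m + t)} ⊔ J := by
  obtain ⟨v, z, hz, rfl⟩ := mem_span_singleton_sup.mp hc
  exact mem_span_singleton_sup.mpr ⟨v, z * w ^ t, J.mul_mem_right _ hz, by ring⟩

lemma Ideal.mem_span_pow_sub_sup_of_mul_pow_mem (hw : IsSMulRegular (R ⧸ J) w) {c : R}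
    {t m : ℕ} (h : c * w ^ t ∈ span {w ^ m} ⊔ J) : c ∈ span {w ^ (m - t)} ⊔ J := by
  rcases le_or_gt t m with htm | hmt
  · obtain ⟨v, z, hz, hvz⟩ := mem_span_singleton_sup.mp h
    have hJ : w ^ t • (c - v * w ^ (m - t)) ∈ J := by
      convert hz using 1
      rw [smul_eq_mul, eq_sub_of_add_eq' hvz, ← pow_sub_mul_pow w htm]
      ring
    have hc := (isSMulRegular_quotient_iff_mem_of_smul_mem J _).mp (hw.pow t) _ hJ
    exact mem_span_singleton_sup.mpr ⟨v, _, hc, add_sub_cancel _ _⟩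
  · simp [Nat.sub_eq_zero_of_le hmt.le]

lemma IsSMulRegular.quotient_span_pow_sup (hw : IsSMulRegular (R ⧸ J) w) {y : R}
    (hy : IsSMulRegular (R ⧸ (span {w} ⊔ J)) y) (a : ℕ) :
    IsSMulRegular (R ⧸ (span {w ^ a} ⊔ J)) y := by
  rw [isSMulRegular_quotient_iff_mem_of_smul_mem] at hy ⊢
  induction a with
  | zero => simp
  | succ a ih =>
    intro c hc
    have hc' : c ∈ span {w ^ a} ⊔ J := ih c <|
      sup_le_sup_right (span_singleton_le_span_singleton.mpr (pow_dvd_pow w a.le_succ)) J hc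
    obtain ⟨u, z, hz, rfl⟩ := mem_span_singleton_sup.mp hc'
    have hyu : y * u * w ^ a ∈ span {w ^ (a + 1)} ⊔ J := by
      have : y • (u * w ^ a + z) - y * z = y * u * w ^ a := by rw [smul_eq_mul]; ring
      exact this ▸ sub_mem hc (mem_sup_right (J.mul_mem_left y hz))
    have hu : u ∈ span {w ^ 1} ⊔ J := by
      rw [pow_one]
      exact hy u (by simpa using mem_span_pow_sub_sup_of_mul_pow_mem hw hyu)
    have huw := mul_pow_mem_span_pow_add_sup hu a
    rw [Nat.add_comm] at huw
    exact add_mem huw (mem_sup_right hz)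

lemma Ideal.mem_span_pow_sup_of_pow_mem {p : ℕ} [ExpChar R p] {I I' : Ideal R}
    (hII' : ∀ z ∈ I, z ^ p ∈ I') (hw : IsSMulRegular (R ⧸ I') w)
    (hbase : ∀ c : R, c ^ p ∈ span {w ^ p} ⊔ I' → c ∈ span {w} ⊔ I) (a : ℕ) {c : R}
    (hc : c ^ p ∈ span {w ^ (a * p)} ⊔ I') : c ∈ span {w ^ a} ⊔ I := by
  induction a generalizing c with
  | zero => simp
  | succ a ih =>
    have hcw : c ∈ span {w ^ 1} ⊔ I := by
      refine (pow_one w).symm ▸ hbase c ?_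
      exact sup_le_sup_right (span_singleton_le_span_singleton.mpr
        (pow_dvd_pow w (Nat.le_mul_of_pos_left p a.succ_pos))) I' hc
    obtain ⟨u, z, hz, rfl⟩ := mem_span_singleton_sup.mp hcw
    have hfrob : (u * w ^ 1 + z) ^ p = u ^ p * w ^ p + z ^ p := by
      rw [add_pow_expChar, mul_pow, pow_one]
    have hup : u ^ p * w ^ p ∈ span {w ^ ((a + 1) * p)} ⊔ I' := by
      rw [← add_sub_cancel_right (u ^ p * w ^ p) (z ^ p), ← hfrob]
      exact sub_mem hc (mem_sup_right (hII' z hz))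
    have hu := ih (by simpa [add_mul] using mem_span_pow_sub_sup_of_mul_pow_mem hw hup)
    exact add_mem (mul_pow_mem_span_pow_add_sup hu 1) (mem_sup_right hz)

lemma Ideal.mul_mem_span_prod_insert_union [DecidableEq ι] (x : ι → R)
    {A : Finset ι} {k : ι} (hk : k ∉ A) {b : ι → ℕ} {c : R}
    (hc : c ∈ span ({∏ j ∈ A, x j} ∪ range fun j => x j ^ update b k (b k - 1) j)) :
    c * x k ∈ span ({∏ j ∈ insert k A, x j} ∪ range fun j => x j ^ b j) := by
  have hmul := mul_mem_mul hc (mem_span_singleton_self (x k))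
  rw [span_mul_span'] at hmul
  refine span_le.mpr ?_ hmul
  rintro _ ⟨g, hg, _, rfl, rfl⟩
  rcases hg with rfl | ⟨j, rfl⟩ <;> dsimp only
  · exact subset_span (Or.inl (by rw [Finset.prod_insert hk, mul_comm]; rfl))
  · rcases eq_or_ne j k with rfl | hjk
    · rw [update_self, ← pow_succ]
      exact mem_of_dvd _ (pow_dvd_pow _ (by omega)) (subset_span (Or.inr ⟨j, rfl⟩))
    · rw [update_of_ne hjk]
      exact mul_mem_right _ _ (subset_span (Or.inr ⟨j, rfl⟩))

end Ideals

section RegularSequence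

variable {R : Type*} [CommRing R] [IsNoetherianRing R] [IsLocalRing R] {d : ℕ} {x : Fin d → R}

lemma RingTheory.Sequence.IsRegular.isWeaklyRegular_map_of_nodup
    (hreg : IsRegular R (List.ofFn x)) {l : List (Fin d)} (hl : l.Nodup) :
    IsWeaklyRegular R (l.map x) := by
  obtain ⟨L, hL, hlL⟩ :=
    List.subperm_iff.mp (List.subperm_of_subset hl fun i _ => List.mem_finRange i)
  obtain ⟨l', hl'⟩ := hlL.exists_perm_append
  have hperm : (List.ofFn x).Perm ((l ++ l').map x) := by
    rw [List.ofFn_eq_map]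
    exact (hL.symm.trans hl').map x
  have := (IsLocalRing.isRegular_of_perm hreg hperm).toIsWeaklyRegular
  rw [List.map_append, isWeaklyRegular_append_iff] at this
  exact this.1

lemma RingTheory.Sequence.IsRegular.isSMulRegular_quotient_span_image
    (hreg : IsRegular R (List.ofFn x)) {T : Finset (Fin d)} {i : Fin d} (hi : i ∉ T) :
    IsSMulRegular (R ⧸ span (x '' T)) (x i) := by
  have hl : (T.toList ++ [i]).Nodup :=
    List.nodup_append.mpr ⟨T.nodup_toList, List.nodup_singleton i, by simp_all⟩
  have := hreg.isWeaklyRegular_map_of_nodup hl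
  rw [List.map_append, isWeaklyRegular_append_iff, List.map_singleton,
    isWeaklyRegular_singleton_iff] at this
  have hT : (ofList (T.toList.map x) • ⊤ : Submodule R R) = span (x '' T) := by
    rw [smul_eq_mul, mul_top, ofList]
    congr 1
    ext
    simp
  exact hT ▸ this.2

lemma RingTheory.Sequence.IsRegular.isSMulRegular_quotient_span_pow_image_sup
    (hreg : IsRegular R (List.ofFn x)) (f : Fin d → ℕ) {S T : Finset (Fin d)}
    (hST : Disjoint S T) {i : Fin d} (hi : i ∉ S ∪ T) :
    IsSMulRegular (R ⧸ (span ((fun j => x j ^ f j) '' S) ⊔ span (x '' T))) (x i) := by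
  classical
  induction S using Finset.induction_on generalizing T i with
  | empty =>
    rw [Finset.coe_empty, image_empty, span_empty, bot_sup_eq]
    exact hreg.isSMulRegular_quotient_span_image (by simpa using hi)
  | insert k S hk ih =>
    rw [Finset.disjoint_insert_left] at hST
    have hsplit : span ((fun j => x j ^ f j) '' ↑(insert k S)) ⊔ span (x '' T) =
        span {x k ^ f k} ⊔ (span ((fun j => x j ^ f j) '' S) ⊔ span (x '' T)) := by
      rw [Finset.coe_insert, image_insert_eq, span_insert, sup_assoc]
    have hsplit₁ : span {x k} ⊔ (span ((fun j => x j ^ f j) '' S) ⊔ span (x '' T)) =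
        span ((fun j => x j ^ f j) '' S) ⊔ span (x '' ↑(insert k T)) := by
      rw [Finset.coe_insert, image_insert_eq, span_insert, sup_left_comm]
    rw [hsplit]
    refine IsSMulRegular.quotient_span_pow_sup (ih hST.2 (by simp [hk, hST.1])) ?_ (f k)
    rw [hsplit₁]
    refine ih (Finset.disjoint_insert_right.mpr ⟨hk, hST.2⟩) ?_
    simp only [Finset.mem_union, Finset.mem_insert] at hi ⊢
    tauto

lemma RingTheory.Sequence.IsRegular.isSMulRegular_quotient_span_pow_image_compl
    (hreg : IsRegular R (List.ofFn x)) (f : Fin d → ℕ) (k : Fin d) :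
    IsSMulRegular (R ⧸ span ((fun j => x j ^ f j) '' {k}ᶜ)) (x k) := by
  classical
  have := hreg.isSMulRegular_quotient_span_pow_image_sup f
    (Finset.disjoint_empty_right {k}ᶜ) (i := k) (by simp)
  rwa [Finset.coe_empty, image_empty, span_empty, sup_bot_eq, Finset.coe_compl,
    Finset.coe_singleton] at this

theorem RingTheory.Sequence.IsRegular.mem_span_range_pow_of_pow_mem
    (hreg : IsRegular R (List.ofFn x)) (hmax : span (range x) = maximalIdeal R)
    (p : ℕ) [ExpChar R p] (e : Fin d → ℕ) {r : R}
    (hr : r ^ p ∈ span (range fun j => x j ^ (e j * p))) :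
    r ∈ span (range fun j => x j ^ e j) := by
  classical
  suffices ∀ S : Finset (Fin d), ∀ e : Fin d → ℕ, (∀ j ∉ S, e j = 1) → ∀ r : R,
      r ^ p ∈ span (range fun j => x j ^ (e j * p)) → r ∈ span (range fun j => x j ^ e j) from
    this Finset.univ e (by simp) r hr
  intro S
  induction S using Finset.induction_on with
  | empty =>
    intro e he r hr
    obtain rfl : e = 1 := funext fun j => he j (Finset.notMem_empty j)
    simp only [Pi.one_apply, one_mul, pow_one] at hr ⊢
    have hprime : (span (range x)).IsPrime := hmax ▸ (maximalIdeal.isMaximal R).isPrime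
    refine hprime.mem_of_pow_mem p (span_le.mpr ?_ hr)
    exact range_subset_iff.mpr fun j =>
      pow_mem_of_mem _ (subset_span (mem_range_self j)) p (expChar_pos R p)
  | insert k S hk ih =>
    intro e he r hr
    rw [span_range_eq_span_singleton_sup _ k] at hr ⊢
    refine mem_span_pow_sup_of_pow_mem (fun z hz => ?_)
      (hreg.isSMulRegular_quotient_span_pow_image_compl _ k) (fun c hc => ?_) (e k) hr
    · simpa [image_image, pow_mul] using pow_mem_span_image_pow p hz
    · have hupd : ∀ j ∉ S, update e k 1 j = 1 := fun j hj => by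
        rcases eq_or_ne j k with rfl | hjk
        · exact update_self ..
        · rw [update_of_ne hjk]
          exact he j (by simp [hjk, hj])
      have := ih (update e k 1) hupd c <|
        (span_range_apply_update (fun j m => x j ^ (m * p)) e k 1).ge (by simpa using hc)
      rw [span_range_apply_update (fun j m => x j ^ m)] at this
      simpa using this

lemma RingTheory.Sequence.IsRegular.mem_span_range_pow_update_of_mul_mem
    (hreg : IsRegular R (List.ofFn x)) {b : Fin d → ℕ} {i k : Fin d} (hik : i ≠ k) {c : R}
    (hc : c * x k ∈ span (range fun j => x j ^ update b i 1 j)) :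
    c ∈ span (range fun j => x j ^ update (update b k (b k - 1)) i 1 j) := by
  rw [span_range_eq_span_singleton_sup _ k, update_of_ne hik.symm] at hc
  rw [update_comm hik.symm, span_range_apply_update (fun j m => x j ^ m)]
  exact mem_span_pow_sub_sup_of_mul_pow_mem (t := 1)
    (hreg.isSMulRegular_quotient_span_pow_image_compl (update b i 1) k) (by rwa [pow_one])

theorem RingTheory.Sequence.IsRegular.mem_span_prod_union_of_forall_mem
    (hreg : IsRegular R (List.ofFn x)) (A : Finset (Fin d)) {b : Fin d → ℕ}
    (hb : ∀ i ∈ A, b i ≠ 0) {r : R}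
    (hr : ∀ i ∈ A, r ∈ span (range fun j => x j ^ update b i 1 j)) :
    r ∈ span ({∏ j ∈ A, x j} ∪ range fun j => x j ^ b j) := by
  classical
  induction A using Finset.induction_on generalizing b r with
  | empty => simp [span_insert]
  | insert k A hk ih =>
    have hrk := hr k (Finset.mem_insert_self k A)
    rw [span_range_apply_update (fun j m => x j ^ m), pow_one] at hrk
    obtain ⟨c, z, hz, rfl⟩ := mem_span_singleton_sup.mp hrk
    have hz' : z ∈ span (range fun j => x j ^ b j) := span_mono (image_subset_range _ _) hz
    have hc : c ∈ span ({∏ j ∈ A, x j} ∪ range fun j => x j ^ update b k (b k - 1) j) := by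
      refine ih (fun i hi => ?_) (fun i hi => ?_)
      · rw [update_of_ne (ne_of_mem_of_not_mem hi hk)]
        exact hb i (Finset.mem_insert_of_mem hi)
      · refine hreg.mem_span_range_pow_update_of_mul_mem (ne_of_mem_of_not_mem hi hk) ?_
        have hbi : update b i 1 ≤ b := fun j => by
          rcases eq_or_ne j i with rfl | hji
          · simpa [Nat.one_le_iff_ne_zero] using hb j (Finset.mem_insert_of_mem hi)
          · simp [hji]
        simpa using sub_mem (hr i (Finset.mem_insert_of_mem hi)) (span_range_pow_antitone x hbi hz')
    exact add_mem (mul_mem_span_prod_insert_union x hk hc) (span_mono subset_union_right hz')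

end RegularSequence

theorem mem_product_ideal_of_frobenius_conditions_general (R : Type*) [CommRing R]
    [IsNoetherianRing R] [IsLocalRing R] (p : ℕ) (hp : p.Prime) [CharP R p]
    (d : ℕ) (x : Fin d → R)
    (hreg : RingTheory.Sequence.IsRegular R (List.ofFn x))
    (hmax : Ideal.span (Set.range x) = IsLocalRing.maximalIdeal R)
    (n : ℕ) (hn : 2 ≤ n) (r : R)
    (h : ∀ i : Fin d,
      r ^ p ∈ Ideal.span (Set.range fun j => x j ^ (if j = i then p else n * p))) :
    r ∈ Ideal.span ({∏ j, x j} ∪ Set.range fun j => x j ^ n) := by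
  have : Fact p.Prime := ⟨hp⟩
  have hr : ∀ i, r ∈ span (range fun j => x j ^ update (fun _ => n) i 1 j) := fun i =>
    hreg.mem_span_range_pow_of_pow_mem hmax p _ <| by
      convert h i using 5 with j
      rcases eq_or_ne j i with rfl | hji <;> simp [*]
  exact hreg.mem_span_prod_union_of_forall_mem Finset.univ (fun _ _ => by omega) fun i _ => hr i

/-- Let `(R, 𝔪)` be a regular local ring of characteristic `p > 0` with regular
system of parameters `x₁, …, x_d` (`d ≥ 1`), encoded as: `R` is a Noetherian local ring and
`x₁, …, x_d` is a regular sequence generating the maximal ideal. If `r ∈ R` satisfies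
`r^p ∈ (x₁^{np}, …, x_{i-1}^{np}, xᵢ^p, x_{i+1}^{np}, …, x_d^{np})` for every `1 ≤ i ≤ d`
(where `n ≥ 2`), then `r ∈ (x₁ ⋯ x_d, x₁ⁿ, …, x_dⁿ)`. -/
theorem mem_product_ideal_of_frobenius_conditions (R : Type*) [CommRing R]
    [IsNoetherianRing R] [IsLocalRing R] (p : ℕ) (hp : p.Prime) [CharP R p]
    (d : ℕ) (hd : 1 ≤ d) (x : Fin d → R)
    (hreg : RingTheory.Sequence.IsRegular R (List.ofFn x))
    (hmax : Ideal.span (Set.range x) = IsLocalRing.maximalIdeal R)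
    (n : ℕ) (hn : 2 ≤ n) (r : R)
    (h : ∀ i : Fin d,
      r ^ p ∈ Ideal.span (Set.range fun j => x j ^ (if j = i then p else n * p))) :
    r ∈ Ideal.span ({∏ j, x j} ∪ Set.range fun j => x j ^ n) :=
  mem_product_ideal_of_frobenius_conditions_general R p hp d x hreg hmax n hn r h
end
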